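/- arXiv:math/0603645 — 4 statements merged into one kernel-verified Lean document; each statement's English description precedes it below -/
import Mathlib

section
/- Cube growth criterion: let d ≥ 2 and L ≥ 1. For a proper subset S ⊊ {1,…,d} define the face F_S(L) := {x ∈ ℤ^d : x_i ∈ [1,L] for i ∈ S, x_i = L+1 for i ∉ S}. Suppose X ⊆ ℤ^d is such that Q^d(L) = {1,…,L}^d is internally spanned by X (i.e., ⟨X ∩ Q^d(L)⟩_{Q^d(L)} = Q^d(L)) and, for every S ⊊ {1,…,d}, the face F_S(L) is |S|-internally spanned by X (under the |S|-dimensional modified bootstrap rule using directions e_i, i ∈ S). Then Q^d(L+1) is internally spanned by X. -/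
/-- Modified bootstrap operator restricted to region `Q`, with active directions `D`. -/
def bootBetaQD (d : ℕ) (Q : Set (Fin d → ℤ)) (D : Set (Fin d)) (W : Set (Fin d → ℤ)) :
    Set (Fin d → ℤ) :=
  W ∪ {x ∈ Q | ∀ i ∈ D, x + Pi.single i 1 ∈ W ∨ x - Pi.single i 1 ∈ W}

/-- Final configuration of the model on region `Q` with directions `D`. -/
def bootClosureQD (d : ℕ) (Q : Set (Fin d → ℤ)) (D : Set (Fin d)) (W : Set (Fin d → ℤ)) :
    Set (Fin d → ℤ) :=
  ⋃ t : ℕ, (bootBetaQD d Q D)^[t] W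

/-- `Q` is internally spanned by `X` with directions `D`. -/
def InternallySpanned (d : ℕ) (Q : Set (Fin d → ℤ)) (D : Set (Fin d))
    (X : Set (Fin d → ℤ)) : Prop :=
  bootClosureQD d Q D (X ∩ Q) = Q

/-- The cube `Q^d(L) = {1,…,L}^d`. -/
def bootCube (d L : ℕ) : Set (Fin d → ℤ) := {x | ∀ i, 1 ≤ x i ∧ x i ≤ (L : ℤ)}

/-- The face `F_S(L)`: coordinates in `S` range over `[1,L]`, others equal `L+1`. -/
def bootFace (d : ℕ) (S : Finset (Fin d)) (L : ℕ) : Set (Fin d → ℤ) :=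
  {x | (∀ i ∈ S, 1 ≤ x i ∧ x i ≤ (L : ℤ)) ∧ ∀ i ∉ S, x i = (L : ℤ) + 1}

section Closure

variable {d : ℕ} {Q : Set (Fin d → ℤ)} {D : Set (Fin d)}

lemma bootBetaQD_mono : Monotone (bootBetaQD d Q D) := by
  intro V W hVW x hx
  rcases hx with hx | ⟨hxQ, hnb⟩
  · exact Or.inl (hVW hx)
  · exact Or.inr ⟨hxQ, fun i hi => (hnb i hi).imp (@hVW _) (@hVW _)⟩

lemma bootBetaQD_iterate_mono (W : Set (Fin d → ℤ)) :
    Monotone fun t : ℕ => (bootBetaQD d Q D)^[t] W :=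
  monotone_nat_of_le_succ fun t => by
    rw [Function.iterate_succ_apply']
    exact Set.subset_union_left

lemma subset_bootClosureQD (W : Set (Fin d → ℤ)) : W ⊆ bootClosureQD d Q D W :=
  Set.subset_iUnion (fun t => (bootBetaQD d Q D)^[t] W) 0

lemma bootBetaQD_bootClosureQD_subset (W : Set (Fin d → ℤ)) :
    bootBetaQD d Q D (bootClosureQD d Q D W) ⊆ bootClosureQD d Q D W := by
  rintro x (hx | ⟨hxQ, hnb⟩)
  · exact hx
  have hstage : ∀ i, ∃ t, i ∈ D →
      x + Pi.single i 1 ∈ (bootBetaQD d Q D)^[t] W ∨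
        x - Pi.single i 1 ∈ (bootBetaQD d Q D)^[t] W := by
    intro i
    by_cases hi : i ∈ D
    · rcases hnb i hi with h | h <;> obtain ⟨t, ht⟩ := Set.mem_iUnion.mp h
      exacts [⟨t, fun _ => Or.inl ht⟩, ⟨t, fun _ => Or.inr ht⟩]
    · exact ⟨0, fun h => absurd h hi⟩
  choose t ht using hstage
  -- finitely many directions, so all the neighbours are present at a common stage
  set T := Finset.univ.sup t
  have hle : ∀ i, (bootBetaQD d Q D)^[t i] W ⊆ (bootBetaQD d Q D)^[T] W := fun i =>
    bootBetaQD_iterate_mono W (Finset.le_sup (Finset.mem_univ i))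
  refine Set.mem_iUnion.mpr ⟨T + 1, ?_⟩
  rw [Function.iterate_succ_apply']
  exact Or.inr ⟨hxQ, fun i hi => (ht i hi).imp (@hle i _) (@hle i _)⟩

lemma bootClosureQD_subset_of_bootBetaQD_subset {W C : Set (Fin d → ℤ)} (hW : W ⊆ C)
    (hC : bootBetaQD d Q D C ⊆ C) : bootClosureQD d Q D W ⊆ C := by
  refine Set.iUnion_subset fun t => ?_
  induction t with
  | zero => exact hW
  | succ t ih =>
    rw [Function.iterate_succ_apply']
    exact (bootBetaQD_mono ih).trans hC

lemma bootClosureQD_subset_region {W : Set (Fin d → ℤ)} (hW : W ⊆ Q) :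
    bootClosureQD d Q D W ⊆ Q :=
  bootClosureQD_subset_of_bootBetaQD_subset hW (Set.union_subset le_rfl fun _ hx => hx.1)

lemma bootBetaQD_subset_bootBetaQD_univ {F C : Set (Fin d → ℤ)} (hFQ : F ⊆ Q)
    (hext : ∀ x ∈ F, ∀ i ∉ D, x + Pi.single i 1 ∈ C ∨ x - Pi.single i 1 ∈ C) :
    bootBetaQD d F D C ⊆ bootBetaQD d Q Set.univ C := by
  rintro x (hx | ⟨hxF, hnb⟩)
  · exact Or.inl hx
  refine Or.inr ⟨hFQ hxF, fun i _ => ?_⟩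
  by_cases hi : i ∈ D
  exacts [hnb i hi, hext x hxF i hi]

end Closure

section Faces

variable {d L : ℕ}

lemma bootFace_univ : bootFace d Finset.univ L = bootCube d L := by
  ext x
  simp [bootFace, bootCube]

lemma bootFace_subset_bootCube_succ (S : Finset (Fin d)) :
    bootFace d S L ⊆ bootCube d (L + 1) := by
  intro x ⟨hS, hSc⟩ i
  push_cast
  by_cases hi : i ∈ S
  · have := hS i hi; omega
  · have := hSc i hi; omega

lemma bootCube_succ_subset_iUnion_bootFace :
    bootCube d (L + 1) ⊆ ⋃ S : Finset (Fin d), bootFace d S L := by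
  intro x hx
  refine Set.mem_iUnion.mpr ⟨Finset.univ.filter fun i => x i ≤ L, ?_, ?_⟩ <;>
  · intro i hi
    have := hx i
    simp only [Finset.mem_filter, Finset.mem_univ, true_and, not_le] at hi
    push_cast at this
    omega

lemma sub_single_mem_bootFace_insert (hL : 1 ≤ L) {S : Finset (Fin d)} {x : Fin d → ℤ}
    (hx : x ∈ bootFace d S L) {i : Fin d} (hi : i ∉ S) :
    x - Pi.single i 1 ∈ bootFace d (insert i S) L := by
  obtain ⟨hS, hSc⟩ := hx
  have hxi := hSc i hi
  refine ⟨fun j hj => ?_, fun j hj => ?_⟩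
  · rcases Finset.mem_insert.mp hj with rfl | hjS
    · simp only [Pi.sub_apply, Pi.single_eq_same, hxi]
      omega
    · have hji : j ≠ i := by rintro rfl; exact hi hjS
      simpa [Pi.single_eq_of_ne hji] using hS j hjS
  · have hji : j ≠ i := by rintro rfl; exact hj (Finset.mem_insert_self _ _)
    simpa [Pi.single_eq_of_ne hji] using hSc j (fun h => hj (Finset.mem_insert_of_mem h))

/-- Faces are absorbed from the cube `F_univ = Q^d(L)` downwards: a site of `F_S` sees, in
each direction `i ∉ S`, the neighbour `x - e_i ∈ F_{S ∪ {i}}`. -/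
lemma bootFace_subset_of_internallySpanned (hL : 1 ≤ L) {X C : Set (Fin d → ℤ)}
    (hC : bootBetaQD d (bootCube d (L + 1)) Set.univ C ⊆ C)
    (hX : X ∩ bootCube d (L + 1) ⊆ C)
    (hspan : ∀ S : Finset (Fin d), InternallySpanned d (bootFace d S L) (↑S) X)
    (S : Finset (Fin d)) : bootFace d S L ⊆ C := by
  induction S using WellFoundedGT.induction with
  | ind S ih =>
    rw [← hspan S]
    refine bootClosureQD_subset_of_bootBetaQD_subset
      (fun x hx => hX ⟨hx.1, bootFace_subset_bootCube_succ S hx.2⟩) ?_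
    refine (bootBetaQD_subset_bootBetaQD_univ (bootFace_subset_bootCube_succ S)
      fun x hx i hi => Or.inr ?_).trans hC
    have hi : i ∉ S := by simpa using hi
    exact ih _ (Finset.ssubset_insert hi) (sub_single_mem_bootFace_insert hL hx hi)

end Faces

theorem stmt_4_general (d L : ℕ) (hL : 1 ≤ L) (X : Set (Fin d → ℤ))
    (hcube : InternallySpanned d (bootCube d L) Set.univ X)
    (hfaces : ∀ S : Finset (Fin d), S ≠ Finset.univ →
      InternallySpanned d (bootFace d S L) (↑S) X) :
    InternallySpanned d (bootCube d (L + 1)) Set.univ X := by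
  have hspan : ∀ S : Finset (Fin d), InternallySpanned d (bootFace d S L) (↑S) X := by
    intro S
    by_cases hS : S = Finset.univ
    · subst hS
      rwa [bootFace_univ, Finset.coe_univ]
    · exact hfaces S hS
  refine (bootClosureQD_subset_region Set.inter_subset_right).antisymm ?_
  refine bootCube_succ_subset_iUnion_bootFace.trans (Set.iUnion_subset fun S => ?_)
  exact bootFace_subset_of_internallySpanned hL (bootBetaQD_bootClosureQD_subset _)
    (subset_bootClosureQD _) hspan S

theorem stmt_4 (d L : ℕ) (hd : 2 ≤ d) (hL : 1 ≤ L) (X : Set (Fin d → ℤ))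
    (hcube : InternallySpanned d (bootCube d L) Set.univ X)
    (hfaces : ∀ S : Finset (Fin d), S ≠ Finset.univ →
      InternallySpanned d (bootFace d S L) (↑S) X) :
    InternallySpanned d (bootCube d (L + 1)) Set.univ X :=
  stmt_4_general d L hL X hcube hfaces
end

section
/- Three-dimensional filling criterion: let L ≥ k ≥ 1 and X ⊆ ℤ^3. Suppose (A) every site of {1,…,L}^3 having at least two of its three coordinates in {1,…,k} belongs to X, and (B) every axis-parallel line segment of k consecutive sites contained in {1,…,L}^3 contains at least one site of X. Then {1,…,L}^3 is internally spanned by X under the modified bootstrap rule: ⟨X ∩ {1,…,L}^3⟩ = {1,…,L}^3. -/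
/-- The modified bootstrap operator in 3 dimensions restricted to a region `Q`. -/
def bootBetaQ (Q W : Set (Fin 3 → ℤ)) : Set (Fin 3 → ℤ) :=
  W ∪ {x ∈ Q | ∀ i : Fin 3, x + Pi.single i 1 ∈ W ∨ x - Pi.single i 1 ∈ W}

/-- The final configuration `⟨W⟩` of the model restricted to `Q`. -/
def bootClosureQ (Q W : Set (Fin 3 → ℤ)) : Set (Fin 3 → ℤ) :=
  ⋃ t : ℕ, (bootBetaQ Q)^[t] W

/-- The cube `{1,…,L}^3`. -/
def cube3 (L : ℕ) : Set (Fin 3 → ℤ) := {x | ∀ i, 1 ≤ x i ∧ x i ≤ (L : ℤ)}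

lemma bootBetaQ_mono (Q : Set (Fin 3 → ℤ)) : Monotone (bootBetaQ Q) := by
  intro W W' h x hx
  rcases hx with hx | ⟨hxQ, hn⟩
  · exact Or.inl (h hx)
  · exact Or.inr ⟨hxQ, fun i => (hn i).imp (@h _) (@h _)⟩

lemma iter_mono (Q W : Set (Fin 3 → ℤ)) {s t : ℕ} (h : s ≤ t) :
    (bootBetaQ Q)^[s] W ⊆ (bootBetaQ Q)^[t] W := by
  induction t with
  | zero => simp_all
  | succ n ih =>
    rcases Nat.le_succ_iff.mp h with h' | h'
    · refine (ih h').trans ?_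
      rw [Function.iterate_succ_apply']
      exact Set.subset_union_left
    · subst h'; rfl

lemma subset_closure' (Q W : Set (Fin 3 → ℤ)) : W ⊆ bootClosureQ Q W :=
  Set.subset_iUnion_of_subset 0 (by rfl)

lemma closure_subset (Q W : Set (Fin 3 → ℤ)) (hW : W ⊆ Q) : bootClosureQ Q W ⊆ Q := by
  refine Set.iUnion_subset fun t => ?_
  induction t with
  | zero => exact hW
  | succ n ih =>
    rw [Function.iterate_succ_apply']
    rintro x (hx | ⟨hxQ, -⟩)
    · exact ih hx
    · exact hxQ

lemma closure_stable (Q W : Set (Fin 3 → ℤ)) {x : Fin 3 → ℤ} (hxQ : x ∈ Q)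
    (h : ∀ i : Fin 3, x + Pi.single i 1 ∈ bootClosureQ Q W ∨
        x - Pi.single i 1 ∈ bootClosureQ Q W) :
    x ∈ bootClosureQ Q W := by
  have h' : ∀ i : Fin 3, ∃ t : ℕ, x + Pi.single i 1 ∈ (bootBetaQ Q)^[t] W ∨
      x - Pi.single i 1 ∈ (bootBetaQ Q)^[t] W := by
    intro i
    rcases h i with hi | hi
    · obtain ⟨t, ht⟩ := Set.mem_iUnion.mp hi; exact ⟨t, Or.inl ht⟩
    · obtain ⟨t, ht⟩ := Set.mem_iUnion.mp hi; exact ⟨t, Or.inr ht⟩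
  choose f hf using h'
  set T : ℕ := Finset.univ.sup f with hT
  have hfT : ∀ i, f i ≤ T := fun i => Finset.le_sup (Finset.mem_univ i)
  refine Set.mem_iUnion.mpr ⟨T + 1, ?_⟩
  rw [Function.iterate_succ_apply']
  exact Or.inr ⟨hxQ, fun i => (hf i).imp (fun h => iter_mono Q W (hfT i) h)
    (fun h => iter_mono Q W (hfT i) h)⟩


lemma mem_cube3 {L : ℕ} {a b c : ℤ} (h1 : 1 ≤ a) (h2 : a ≤ (L:ℤ)) (h3 : 1 ≤ b)
    (h4 : b ≤ (L:ℤ)) (h5 : 1 ≤ c) (h6 : c ≤ (L:ℤ)) : ![a,b,c] ∈ cube3 L := by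
  intro i; fin_cases i <;> simp <;> omega

lemma vadd0 (a b c : ℤ) : ![a,b,c] + Pi.single (0:Fin 3) 1 = ![a+1,b,c] := by
  funext j; fin_cases j <;> simp
lemma vadd1 (a b c : ℤ) : ![a,b,c] + Pi.single (1:Fin 3) 1 = ![a,b+1,c] := by
  funext j; fin_cases j <;> simp
lemma vadd2 (a b c : ℤ) : ![a,b,c] + Pi.single (2:Fin 3) 1 = ![a,b,c+1] := by
  funext j; fin_cases j <;> simp
lemma vsub0 (a b c : ℤ) : ![a,b,c] - Pi.single (0:Fin 3) 1 = ![a-1,b,c] := by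
  funext j; fin_cases j <;> simp
lemma vsub1 (a b c : ℤ) : ![a,b,c] - Pi.single (1:Fin 3) 1 = ![a,b-1,c] := by
  funext j; fin_cases j <;> simp
lemma vsub2 (a b c : ℤ) : ![a,b,c] - Pi.single (2:Fin 3) 1 = ![a,b,c-1] := by
  funext j; fin_cases j <;> simp
lemma vsmul0 (a b c t : ℤ) : ![a,b,c] + t • Pi.single (0:Fin 3) 1 = ![a+t,b,c] := by
  funext j; fin_cases j <;> simp
lemma vsmul1 (a b c t : ℤ) : ![a,b,c] + t • Pi.single (1:Fin 3) 1 = ![a,b+t,c] := by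
  funext j; fin_cases j <;> simp
lemma vsmul2 (a b c t : ℤ) : ![a,b,c] + t • Pi.single (2:Fin 3) 1 = ![a,b,c+t] := by
  funext j; fin_cases j <;> simp

lemma fin3cases (j : Fin 3) : j = 0 ∨ j = 1 ∨ j = 2 := by revert j; decide

lemma spread {L : ℕ} {C : Set (Fin 3 → ℤ)}
    (stable : ∀ x ∈ cube3 L,
      (∀ i : Fin 3, x + Pi.single i 1 ∈ C ∨ x - Pi.single i 1 ∈ C) → x ∈ C)
    (i : Fin 3) (p : ℤ → Fin 3 → ℤ)
    (hp : ∀ z, p (z + 1) = p z + Pi.single i 1)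
    {lo hi : ℤ}
    (side : ∀ z, lo ≤ z → z ≤ hi → p z ∈ cube3 L ∧
      ∀ j : Fin 3, j ≠ i → (p z + Pi.single j 1 ∈ C ∨ p z - Pi.single j 1 ∈ C))
    {z0 : ℤ} (hlo : lo ≤ z0) (hhi : z0 ≤ hi) (hseed : p z0 ∈ C) :
    ∀ z, lo ≤ z → z ≤ hi → p z ∈ C := by
  have hup : ∀ z, z0 ≤ z → z ≤ hi → p z ∈ C := by
    intro z hz
    refine Int.le_induction (motive := fun z _ => z ≤ hi → p z ∈ C) (fun _ => hseed)
      (fun n hn ih hn1 => ?_) z hz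
    have hpn : p n ∈ C := ih (by omega)
    refine stable _ (side (n+1) (by omega) hn1).1 fun j => ?_
    by_cases hj : j = i
    · subst hj; right
      rw [hp n, add_sub_cancel_right]; exact hpn
    · exact (side (n+1) (by omega) hn1).2 j hj
  have hdown : ∀ z, z ≤ z0 → lo ≤ z → p z ∈ C := by
    intro z hz
    refine Int.le_induction_down (motive := fun z _ => lo ≤ z → p z ∈ C) (fun _ => hseed)
      (fun n hn ih hn1 => ?_) z hz
    have hpn : p n ∈ C := ih (by omega)
    refine stable _ (side (n-1) hn1 (by omega)).1 fun j => ?_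
    by_cases hj : j = i
    · subst hj; left
      have h := hp (n-1)
      rw [sub_add_cancel] at h
      rw [← h]; exact hpn
    · exact (side (n-1) hn1 (by omega)).2 j hj
  intro z h1 h2
  rcases le_total z z0 with h | h
  · exact hdown z h h1
  · exact hup z h h2

theorem stmt_5 (L k : ℕ) (hk : 1 ≤ k) (hkL : k ≤ L) (X : Set (Fin 3 → ℤ))
    (hA : ∀ x ∈ cube3 L,
      (∃ i j : Fin 3, i ≠ j ∧ 1 ≤ x i ∧ x i ≤ (k : ℤ) ∧ 1 ≤ x j ∧ x j ≤ (k : ℤ)) → x ∈ X)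
    (hB : ∀ (i : Fin 3) (v : Fin 3 → ℤ),
      (∀ t : ℕ, t < k → v + (t : ℤ) • Pi.single i 1 ∈ cube3 L) →
      ∃ t : ℕ, t < k ∧ v + (t : ℤ) • Pi.single i 1 ∈ X) :
    bootClosureQ (cube3 L) (X ∩ cube3 L) = cube3 L := by
  have hk' : (1:ℤ) ≤ (k:ℤ) := by exact_mod_cast hk
  have hkL' : (k:ℤ) ≤ (L:ℤ) := by exact_mod_cast hkL
  set C := bootClosureQ (cube3 L) (X ∩ cube3 L) with hC
  have hstable : ∀ x ∈ cube3 L,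
      (∀ i : Fin 3, x + Pi.single i 1 ∈ C ∨ x - Pi.single i 1 ∈ C) → x ∈ C :=
    fun x hx h => closure_stable _ _ hx h
  have hXC : ∀ x ∈ cube3 L, x ∈ X → x ∈ C :=
    fun x hx hxX => subset_closure' _ _ ⟨hxX, hx⟩
  have hA' : ∀ a b c : ℤ, ![a,b,c] ∈ cube3 L →
      ((1 ≤ a ∧ a ≤ k ∧ 1 ≤ b ∧ b ≤ k) ∨ (1 ≤ a ∧ a ≤ k ∧ 1 ≤ c ∧ c ≤ k) ∨
        (1 ≤ b ∧ b ≤ k ∧ 1 ≤ c ∧ c ≤ k)) → ![a,b,c] ∈ C := by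
    intro a b c hcb h
    refine hXC _ hcb (hA _ hcb ?_)
    rcases h with ⟨h1,h2,h3,h4⟩|⟨h1,h2,h3,h4⟩|⟨h1,h2,h3,h4⟩
    · exact ⟨0, 1, by decide, by simpa using h1, by simpa using h2,
        by simpa using h3, by simpa using h4⟩
    · exact ⟨0, 2, by decide, by simpa using h1, by simpa using h2,
        by simpa using h3, by simpa using h4⟩
    · exact ⟨1, 2, by decide, by simpa using h1, by simpa using h2,
        by simpa using h3, by simpa using h4⟩
  -- Stage 2 : fill the slab {c ≤ k}
  have S2 : ∀ b : ℤ, (k:ℤ) ≤ b → ∀ a b' c : ℤ, 1 ≤ a → a ≤ L → 1 ≤ b' → b' ≤ b →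
      b' ≤ L → 1 ≤ c → c ≤ k → ![a,b',c] ∈ C := by
    refine Int.le_induction (motive := fun b _ => ∀ a b' c : ℤ, 1 ≤ a → a ≤ L → 1 ≤ b' →
      b' ≤ b → b' ≤ L → 1 ≤ c → c ≤ k → ![a,b',c] ∈ C) ?_ ?_
    · intro a b' c h1 h2 h3 h4 h5 h6 h7
      exact hA' a b' c (mem_cube3 h1 h2 h3 h5 h6 (h7.trans hkL'))
        (Or.inr (Or.inr ⟨h3, h4, h6, h7⟩))
    · intro b hkb ih a b' c h1 h2 h3 h4 h5 h6 h7
      rcases lt_or_eq_of_le h4 with h4' | h4'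
      · exact ih a b' c h1 h2 h3 (by omega) h5 h6 h7
      · subst h4'
        -- fill the new slab at coordinate b' = b+1, by induction on a
        have inner : ∀ a : ℤ, (k:ℤ) ≤ a → ∀ a' c : ℤ, 1 ≤ a' → a' ≤ a → a' ≤ L →
            1 ≤ c → c ≤ k → ![a', b+1, c] ∈ C := by
          refine Int.le_induction (motive := fun a _ => ∀ a' c : ℤ, 1 ≤ a' → a' ≤ a →
            a' ≤ L → 1 ≤ c → c ≤ k → ![a', b+1, c] ∈ C) ?_ ?_
          · intro a' c g1 g2 g3 g4 g5
            exact hA' a' (b+1) c (mem_cube3 g1 g3 (by omega) h5 g4 (g5.trans hkL'))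
              (Or.inr (Or.inl ⟨g1, g2, g4, g5⟩))
          · intro a hka ih2 a' c g1 g2 g3 g4 g5
            rcases lt_or_eq_of_le g2 with g2' | g2'
            · exact ih2 a' c g1 (by omega) g3 g4 g5
            · subst g2'
              obtain ⟨t, htk, hX⟩ := hB 2 ![a+1, b+1, 1] (by
                intro t ht
                have ht' : (t:ℤ) < k := by exact_mod_cast ht
                rw [vsmul2]
                exact mem_cube3 (by omega) g3 (by omega) h5 (by omega)
                  (by omega))
              have htk' : (t:ℤ) < k := by exact_mod_cast htk
              rw [vsmul2] at hX
              have hseed : ![a+1, b+1, 1+(t:ℤ)] ∈ C := hXC _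
                (mem_cube3 (by omega) g3 (by omega) h5 (by omega) (by omega)) hX
              have hside : ∀ z : ℤ, 1 ≤ z → z ≤ (k:ℤ) →
                  ![a+1, b+1, z] ∈ cube3 L ∧ ∀ j : Fin 3, j ≠ 2 →
                    (![a+1, b+1, z] + Pi.single j 1 ∈ C ∨
                     ![a+1, b+1, z] - Pi.single j 1 ∈ C) := by
                intro z hz1 hz2
                refine ⟨mem_cube3 (by omega) g3 (by omega) h5 hz1 (hz2.trans hkL'), ?_⟩
                intro j hj
                rcases fin3cases j with rfl | rfl | rfl
                · right; rw [vsub0]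
                  simpa using ih2 a z (by omega) le_rfl (by omega) hz1 hz2
                · right; rw [vsub1]
                  have : a + 1 - 1 = a := by ring
                  simpa using ih (a+1) b z (by omega) g3 (by omega) le_rfl (by omega) hz1 hz2
                · exact absurd rfl hj
              exact spread hstable 2 (fun z => ![a+1, b+1, z]) (fun z => (vadd2 _ _ _).symm)
                hside (by omega) (by omega : 1+(t:ℤ) ≤ (k:ℤ)) hseed c g4 g5
        exact inner (max (k:ℤ) a) (le_max_left _ _) a c h1 (le_max_right _ _) h2 h6 h7
  -- Stage 3 : fill the whole cube by induction on the third coordinate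
  have S3 : ∀ c : ℤ, (k:ℤ) ≤ c → ∀ a b c' : ℤ, 1 ≤ a → a ≤ L → 1 ≤ b → b ≤ L →
      1 ≤ c' → c' ≤ c → c' ≤ L → ![a,b,c'] ∈ C := by
    refine Int.le_induction (motive := fun c _ => ∀ a b c' : ℤ, 1 ≤ a → a ≤ L → 1 ≤ b →
      b ≤ L → 1 ≤ c' → c' ≤ c → c' ≤ L → ![a,b,c'] ∈ C) ?_ ?_
    · intro a b c' h1 h2 h3 h4 h5 h6 h7
      exact S2 (L:ℤ) hkL' a b c' h1 h2 h3 h4 h4 h5 h6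
    · intro c hkc ih a b c' h1 h2 h3 h4 h5 h6 h7
      rcases lt_or_eq_of_le h6 with h6' | h6'
      · exact ih a b c' h1 h2 h3 h4 h5 (by omega) h7
      · subst h6'
        -- first fill the strip {a ≤ k} of the slab at height c+1
        have strip : ∀ b : ℤ, (k:ℤ) ≤ b → ∀ a' b' : ℤ, 1 ≤ a' → a' ≤ k → 1 ≤ b' →
            b' ≤ b → b' ≤ L → ![a', b', c+1] ∈ C := by
          refine Int.le_induction (motive := fun b _ => ∀ a' b' : ℤ, 1 ≤ a' → a' ≤ k →
            1 ≤ b' → b' ≤ b → b' ≤ L → ![a', b', c+1] ∈ C) ?_ ?_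
          · intro a' b' g1 g2 g3 g4 g5
            exact hA' a' b' (c+1) (mem_cube3 g1 (g2.trans hkL') g3 g5 (by omega) h7)
              (Or.inl ⟨g1, g2, g3, g4⟩)
          · intro b hkb ihb a' b' g1 g2 g3 g4 g5
            rcases lt_or_eq_of_le g4 with g4' | g4'
            · exact ihb a' b' g1 g2 g3 (by omega) g5
            · subst g4'
              obtain ⟨t, htk, hX⟩ := hB 0 ![1, b+1, c+1] (by
                intro t ht
                have ht' : (t:ℤ) < k := by exact_mod_cast ht
                rw [vsmul0]
                exact mem_cube3 (by omega) (by omega) (by omega) g5 (by omega) h7)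
              have htk' : (t:ℤ) < k := by exact_mod_cast htk
              rw [vsmul0] at hX
              have hseed : ![1+(t:ℤ), b+1, c+1] ∈ C := hXC _
                (mem_cube3 (by omega) (by omega) (by omega) g5 (by omega) h7) hX
              have hside : ∀ z : ℤ, 1 ≤ z → z ≤ (k:ℤ) →
                  ![z, b+1, c+1] ∈ cube3 L ∧ ∀ j : Fin 3, j ≠ 0 →
                    (![z, b+1, c+1] + Pi.single j 1 ∈ C ∨
                     ![z, b+1, c+1] - Pi.single j 1 ∈ C) := by
                intro z hz1 hz2
                refine ⟨mem_cube3 hz1 (hz2.trans hkL') (by omega) g5 (by omega) h7, ?_⟩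
                intro j hj
                rcases fin3cases j with rfl | rfl | rfl
                · exact absurd rfl hj
                · right; rw [vsub1]
                  simpa using ihb z b hz1 hz2 (by omega) le_rfl (by omega)
                · right; rw [vsub2]
                  simpa using ih z (b+1) c hz1 (hz2.trans hkL') (by omega) g5 (by omega)
                    le_rfl (by omega)
              have hsp := spread hstable 0 (fun z => ![z, b+1, c+1])
                (fun z => (vadd0 _ _ _).symm) hside (by omega)
                ((by omega : 1+(t:ℤ) ≤ (k:ℤ))) hseed a' g1 g2
              exact hsp
        -- then fill the whole slab at height c+1, by induction on a
        have full : ∀ a : ℤ, (k:ℤ) ≤ a → ∀ a' b : ℤ, 1 ≤ a' → a' ≤ a → a' ≤ L →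
            1 ≤ b → b ≤ L → ![a', b, c+1] ∈ C := by
          refine Int.le_induction (motive := fun a _ => ∀ a' b : ℤ, 1 ≤ a' → a' ≤ a →
            a' ≤ L → 1 ≤ b → b ≤ L → ![a', b, c+1] ∈ C) ?_ ?_
          · intro a' b g1 g2 g3 g4 g5
            exact strip (L:ℤ) hkL' a' b g1 g2 g4 g5 g5
          · intro a hka iha a' b g1 g2 g3 g4 g5
            rcases lt_or_eq_of_le g2 with g2' | g2'
            · exact iha a' b g1 (by omega) g3 g4 g5
            · subst g2'
              obtain ⟨t, htk, hX⟩ := hB 1 ![a+1, 1, c+1] (by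
                intro t ht
                have ht' : (t:ℤ) < k := by exact_mod_cast ht
                rw [vsmul1]
                exact mem_cube3 (by omega) g3 (by omega) (by omega) (by omega) h7)
              have htk' : (t:ℤ) < k := by exact_mod_cast htk
              rw [vsmul1] at hX
              have hseed : ![a+1, 1+(t:ℤ), c+1] ∈ C := hXC _
                (mem_cube3 (by omega) g3 (by omega) (by omega) (by omega) h7) hX
              have hside : ∀ z : ℤ, 1 ≤ z → z ≤ (L:ℤ) →
                  ![a+1, z, c+1] ∈ cube3 L ∧ ∀ j : Fin 3, j ≠ 1 →
                    (![a+1, z, c+1] + Pi.single j 1 ∈ C ∨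
                     ![a+1, z, c+1] - Pi.single j 1 ∈ C) := by
                intro z hz1 hz2
                refine ⟨mem_cube3 (by omega) g3 hz1 hz2 (by omega) h7, ?_⟩
                intro j hj
                rcases fin3cases j with rfl | rfl | rfl
                · right; rw [vsub0]
                  simpa using iha a z (by omega) le_rfl (by omega) hz1 hz2
                · exact absurd rfl hj
                · right; rw [vsub2]
                  simpa using ih (a+1) z c (by omega) g3 hz1 hz2 (by omega) le_rfl (by omega)
              exact spread hstable 1 (fun z => ![a+1, z, c+1]) (fun z => (vadd1 _ _ _).symm)
                hside (by omega) ((by omega : 1+(t:ℤ) ≤ (L:ℤ))) hseed b g4 g5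
        exact full (max (k:ℤ) a) (le_max_left _ _) a b h1 (le_max_right _ _) h2 h3 h4
  refine Set.Subset.antisymm (closure_subset _ _ Set.inter_subset_right) ?_
  intro x hx
  have hx0 := hx 0
  have hx1 := hx 1
  have hx2 := hx 2
  have hxe : x = ![x 0, x 1, x 2] := by
    funext j; fin_cases j <;> rfl
  rw [hC] at *
  rw [hxe]
  exact S3 (L:ℤ) hkL' (x 0) (x 1) (x 2) hx0.1 hx0.2 hx1.1 hx1.2 hx2.1 hx2.2 hx2.2
end

section
/- For all d ≥ 2, a > 0, ε > 0, there exists q > 0 such that for all 0 < p < q: p^{(exp^{d−2}(a/p))^d} ≥ 1 / exp^{d−1}((a+ε)/p), where exp^n denotes the n-th iterate of the exponential function (exp^0(x) = x). -/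
/-- `iterExp n x` is the `n`-th iterate of the exponential function applied to `x`. -/
noncomputable def iterExp : ℕ → ℝ → ℝ
  | 0, x => x
  | n + 1, x => Real.exp (iterExp n x)

lemma le_iterExp (m : ℕ) (x : ℝ) : x ≤ iterExp m x := by
  induction m with
  | zero => simp [iterExp]
  | succ n ih =>
    have h := Real.add_one_le_exp (iterExp n x)
    show x ≤ Real.exp (iterExp n x)
    linarith

lemma sq_div_four_le_exp (t : ℝ) (ht : 0 ≤ t) : t ^ 2 / 4 ≤ Real.exp t := by
  have h1 : Real.exp (t / 2) * Real.exp (t / 2) = Real.exp t := by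
    rw [← Real.exp_add]; ring_nf
  have h2 := Real.add_one_le_exp (t / 2)
  nlinarith [Real.exp_pos (t / 2)]

lemma key_lemma (d : ℕ) (hd1 : 1 ≤ d) (a ε p : ℝ) (hp : 0 < p) (ha : 0 < a)
    (hε : 0 < ε)
    (hc1 : 2 * (d : ℝ) ≤ Real.exp (ε / (2 * p)))
    (hc2 : ε / (2 * p) ≤ Real.exp (a / p)) :
    ∀ m, 1 ≤ m →
      (d : ℝ) * iterExp m (a / p) + ε / (2 * p) ≤ iterExp m ((a + ε) / p) := by
  have hdr : (1 : ℝ) ≤ (d : ℝ) := by exact_mod_cast hd1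
  intro m hm
  induction m, hm using Nat.le_induction with
  | base =>
    show (d : ℝ) * Real.exp (a / p) + ε / (2 * p) ≤ Real.exp ((a + ε) / p)
    have h1 : Real.exp ((a + ε) / p)
        = Real.exp (a / p) * (Real.exp (ε / (2 * p)) * Real.exp (ε / (2 * p))) := by
      rw [← Real.exp_add, ← Real.exp_add]; ring_nf
    rw [h1]
    have hE := Real.exp_pos (a / p)
    have he2 : (2 * (d : ℝ)) * (2 * (d : ℝ)) ≤ Real.exp (ε / (2 * p)) * Real.exp (ε / (2 * p)) :=
      mul_le_mul hc1 hc1 (by positivity) (Real.exp_pos _).le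
    have hEe : Real.exp (a / p) * ((2 * (d : ℝ)) * (2 * (d : ℝ)))
        ≤ Real.exp (a / p) * (Real.exp (ε / (2 * p)) * Real.exp (ε / (2 * p))) :=
      mul_le_mul_of_nonneg_left he2 hE.le
    have hd4 : (d : ℝ) + 1 ≤ (2 * (d : ℝ)) * (2 * (d : ℝ)) := by nlinarith
    have h5 : ((d : ℝ) + 1) * Real.exp (a / p)
        ≤ ((2 * (d : ℝ)) * (2 * (d : ℝ))) * Real.exp (a / p) :=
      mul_le_mul_of_nonneg_right hd4 hE.le
    linarith
  | succ m hm ih =>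
    show (d : ℝ) * Real.exp (iterExp m (a / p)) + ε / (2 * p)
        ≤ Real.exp (iterExp m ((a + ε) / p))
    set X := iterExp m (a / p) with hX
    have hXa : a / p ≤ X := le_iterExp m (a / p)
    have hX0 : 0 ≤ X := le_trans (le_of_lt (div_pos ha hp)) hXa
    have h1 : Real.exp ((d : ℝ) * X + ε / (2 * p)) ≤ Real.exp (iterExp m ((a + ε) / p)) :=
      Real.exp_le_exp.mpr ih
    have h2 : Real.exp ((d : ℝ) * X + ε / (2 * p))
        = Real.exp X ^ d * Real.exp (ε / (2 * p)) := by
      rw [Real.exp_add, Real.exp_nat_mul]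
    have h3 : Real.exp X ≤ Real.exp X ^ d :=
      le_self_pow₀ (Real.one_le_exp hX0) (by omega)
    have h4 : ε / (2 * p) ≤ Real.exp X := le_trans hc2 (Real.exp_le_exp.mpr hXa)
    have h5 : (d : ℝ) * Real.exp X + ε / (2 * p) ≤ Real.exp X ^ d * Real.exp (ε / (2 * p)) := by
      nlinarith [Real.exp_pos X, Real.exp_pos (ε / (2 * p)), pow_pos (Real.exp_pos X) d]
    calc (d : ℝ) * Real.exp X + ε / (2 * p)
        ≤ Real.exp X ^ d * Real.exp (ε / (2 * p)) := h5
      _ = Real.exp ((d : ℝ) * X + ε / (2 * p)) := h2.symm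
      _ ≤ Real.exp (iterExp m ((a + ε) / p)) := h1

theorem stmt_8 (d : ℕ) (hd : 4 ≤ d) (a ε : ℝ) (ha : 0 < a) (hε : 0 < ε) :
    ∃ q > 0, ∀ p : ℝ, 0 < p → p < q →
      1 / iterExp (d - 1) ((a + ε) / p) ≤ p ^ ((iterExp (d - 2) (a / p)) ^ d) := by
  obtain ⟨k, rfl⟩ : ∃ k, d = k + 4 := ⟨d - 4, by omega⟩
  set D : ℕ := k + 4 with hD
  refine ⟨min (min 1 (ε / (4 * (D : ℝ)))) (min (a ^ 2 / (2 * ε)) (ε ^ 2 / 16)), ?_, ?_⟩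
  · have hD0 : (0 : ℝ) < D := by positivity
    positivity
  intro p hp hpq
  obtain ⟨⟨hp1, hp2⟩, hp3, hp4⟩ :
      (p < 1 ∧ p < ε / (4 * (D : ℝ))) ∧ p < a ^ 2 / (2 * ε) ∧ p < ε ^ 2 / 16 := by
    constructor
    · exact lt_min_iff.mp (lt_of_lt_of_le hpq (min_le_left _ _))
    · exact lt_min_iff.mp (lt_of_lt_of_le hpq (min_le_right _ _))
  have hD0 : (0 : ℝ) < D := by positivity
  have hDr : (4 : ℝ) ≤ (D : ℝ) := by exact_mod_cast (by omega : 4 ≤ D)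
  -- condition 1 : 2 D ≤ exp (ε / (2 p))
  have hc1 : 2 * (D : ℝ) ≤ Real.exp (ε / (2 * p)) := by
    have h : 2 * (D : ℝ) < ε / (2 * p) := by
      rw [lt_div_iff₀ (by positivity)]
      have := (lt_div_iff₀ (by positivity : (0:ℝ) < 4 * (D:ℝ))).mp hp2
      nlinarith
    have := Real.add_one_le_exp (ε / (2 * p))
    linarith
  -- condition 2 : ε / (2 p) ≤ exp (a / p)
  have hc2 : ε / (2 * p) ≤ Real.exp (a / p) := by
    have h1 : (a / p) ^ 2 / 4 ≤ Real.exp (a / p) :=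
      sq_div_four_le_exp _ (by positivity)
    have heq : (a / p) ^ 2 / 4 = a ^ 2 / (4 * p ^ 2) := by
      field_simp
    have h2 : ε / (2 * p) ≤ (a / p) ^ 2 / 4 := by
      rw [heq, div_le_div_iff₀ (by positivity) (by positivity)]
      have h := (lt_div_iff₀ (by positivity : (0:ℝ) < 2 * ε)).mp hp3
      nlinarith [mul_lt_mul_of_pos_right h hp]
    linarith
  -- log (1/p) ≤ exp (ε / (2 p))
  have hL : Real.log (1 / p) ≤ Real.exp (ε / (2 * p)) := by
    have h1 : Real.log (1 / p) ≤ 1 / p := by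
      have := Real.log_le_sub_one_of_pos (by positivity : (0:ℝ) < 1 / p)
      linarith
    have h2 : (ε / (2 * p)) ^ 2 / 4 ≤ Real.exp (ε / (2 * p)) :=
      sq_div_four_le_exp _ (by positivity)
    have heq : (ε / (2 * p)) ^ 2 / 4 = ε ^ 2 / (16 * p ^ 2) := by
      field_simp; ring
    have h3 : 1 / p ≤ (ε / (2 * p)) ^ 2 / 4 := by
      rw [heq, div_le_div_iff₀ (by positivity) (by positivity)]
      have h := (lt_div_iff₀ (by norm_num : (0:ℝ) < 16)).mp hp4
      nlinarith [mul_lt_mul_of_pos_right h hp]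
    linarith
  -- apply the key lemma at m = k + 1
  have hkey := key_lemma D (by omega) a ε p hp ha hε hc1 hc2 (k + 1) (by omega)
  set X := iterExp (k + 1) (a / p) with hXdef
  set F := iterExp (k + 1) ((a + ε) / p) with hFdef
  have hX0 : 0 ≤ X := le_trans (le_of_lt (div_pos ha hp)) (le_iterExp _ _)
  -- main bound : (exp X)^D * log(1/p) ≤ exp F
  have hmain : Real.exp X ^ D * Real.log (1 / p) ≤ Real.exp F := by
    have h2 : Real.exp X ^ D * Real.exp (ε / (2 * p))
        = Real.exp ((D : ℝ) * X + ε / (2 * p)) := by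
      rw [Real.exp_add, Real.exp_nat_mul]
    have h3 : Real.exp ((D : ℝ) * X + ε / (2 * p)) ≤ Real.exp F :=
      Real.exp_le_exp.mpr hkey
    have h4 : Real.exp X ^ D * Real.log (1 / p)
        ≤ Real.exp X ^ D * Real.exp (ε / (2 * p)) :=
      mul_le_mul_of_nonneg_left hL (le_of_lt (pow_pos (Real.exp_pos X) D))
    calc Real.exp X ^ D * Real.log (1 / p)
        ≤ Real.exp X ^ D * Real.exp (ε / (2 * p)) := h4
      _ = Real.exp ((D : ℝ) * X + ε / (2 * p)) := h2
      _ ≤ Real.exp F := h3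
  -- rewrite the goal
  have e1 : D - 1 = k + 3 := rfl
  have e2 : D - 2 = k + 2 := rfl
  rw [e1, e2]
  show 1 / Real.exp (Real.exp F) ≤ p ^ (Real.exp X ^ D)
  rw [Real.rpow_def_of_pos hp, one_div, ← Real.exp_neg, Real.exp_le_exp]
  have hlog : Real.log (1 / p) = -Real.log p := by
    rw [one_div, Real.log_inv]
  rw [hlog] at hmain
  nlinarith [hmain]
end

section
/- Balancing bound (heart of the d = 3 upper bound): let λ, ε, C > 0. There exists a constant C₃ > 0 depending only on λ, ε, C such that for all sufficiently small p > 0 and all integers r ≥ 1, e^{−ε/p} · min(1, e^{2λ/p} p^{C(r−1)}) ≤ p^{C₃ r}. -/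
theorem stmt_12 (lam ε C : ℝ) (hlam : 0 < lam) (hε : 0 < ε) (hC : 0 < C) :
    ∃ C₃ > 0, ∃ q > 0, ∀ p : ℝ, 0 < p → p < q → ∀ r : ℕ, 1 ≤ r →
      Real.exp (-ε / p) * min 1 (Real.exp (2 * lam / p) * p ^ (C * ((r : ℝ) - 1))) ≤
        p ^ (C₃ * (r : ℝ)) := by
  set C₃ := min (ε * C / (8 * lam)) (min (C / 2) (min 1 (ε / 2))) with hC₃def
  have hC₃pos : 0 < C₃ := by
    apply lt_min (by positivity)
    exact lt_min (by positivity) (lt_min one_pos (by positivity))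
  have hC₃1 : C₃ ≤ ε * C / (8 * lam) := min_le_left _ _
  have hC₃2 : C₃ ≤ C / 2 := le_trans (min_le_right _ _) (min_le_left _ _)
  have hC₃3 : C₃ ≤ 1 := le_trans (min_le_right _ _) (le_trans (min_le_right _ _) (min_le_left _ _))
  have hC₃4 : C₃ ≤ ε / 2 :=
    le_trans (min_le_right _ _) (le_trans (min_le_right _ _) (min_le_right _ _))
  refine ⟨C₃, hC₃pos, min 1 (ε ^ 2 / 4), lt_min one_pos (by positivity), ?_⟩
  intro p hp hpq r hr
  have hp1 : p < 1 := lt_of_lt_of_le hpq (min_le_left _ _)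
  have hpε : p ≤ ε ^ 2 / 4 := le_of_lt (lt_of_lt_of_le hpq (min_le_right _ _))
  have hlp : Real.log p < 0 := Real.log_neg hp hp1
  set L := -Real.log p with hLdef
  have hL0 : 0 < L := by simp [hLdef]; linarith
  have hr1 : (1 : ℝ) ≤ (r : ℝ) := by exact_mod_cast hr
  have hsp : Real.sqrt p ≤ ε / 2 := by
    have h1 : Real.sqrt p ≤ Real.sqrt (ε ^ 2 / 4) := Real.sqrt_le_sqrt hpε
    have h2 : Real.sqrt (ε ^ 2 / 4) = ε / 2 := by
      rw [show ε ^ 2 / 4 = (ε / 2) ^ 2 by ring, Real.sqrt_sq (by positivity)]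
    linarith
  have hsp0 : 0 < Real.sqrt p := Real.sqrt_pos.mpr hp
  have hLsq : L ≤ 2 / Real.sqrt p := by
    have h1 : Real.log (1 / Real.sqrt p) ≤ 1 / Real.sqrt p - 1 :=
      Real.log_le_sub_one_of_pos (by positivity)
    have h2 : Real.log (1 / Real.sqrt p) = -(Real.log p / 2) := by
      rw [Real.log_div one_ne_zero (ne_of_gt hsp0), Real.log_one, Real.log_sqrt hp.le]
      ring
    rw [h2] at h1
    have h3 : L / 2 ≤ 1 / Real.sqrt p := by rw [hLdef]; linarith
    calc L = 2 * (L / 2) := by ring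
    _ ≤ 2 * (1 / Real.sqrt p) := by linarith
    _ = 2 / Real.sqrt p := by ring
  -- key: p * L ≤ ε  (i.e. L ≤ ε / p, i.e. -ε/p ≤ log p)
  have hpL : p * L ≤ ε := by
    have h1 : p * L ≤ p * (2 / Real.sqrt p) := by
      exact mul_le_mul_of_nonneg_left hLsq hp.le
    have h2 : p * (2 / Real.sqrt p) = 2 * Real.sqrt p := by
      field_simp
      nlinarith [Real.sq_sqrt hp.le]
    nlinarith
  have hεL : L ≤ ε / p := by rw [le_div_iff₀ hp]; linarith [hpL]
  -- p * L ≤ 1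
  have hpL1 : p * L ≤ 1 := by
    have h1 : Real.log (1 / p) ≤ 1 / p - 1 := Real.log_le_sub_one_of_pos (by positivity)
    have h2 : Real.log (1 / p) = L := by
      rw [Real.log_div one_ne_zero (ne_of_gt hp), Real.log_one]; simp [hLdef]
    rw [h2] at h1
    have := (le_div_iff₀ hp).mp (by linarith : L ≤ 1 / p)
    linarith
  have hrw1 : p ^ (C * ((r : ℝ) - 1)) = Real.exp (C * ((r : ℝ) - 1) * Real.log p) := by
    rw [Real.rpow_def_of_pos hp, mul_comm]
  have hrw2 : p ^ (C₃ * (r : ℝ)) = Real.exp (C₃ * (r : ℝ) * Real.log p) := by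
    rw [Real.rpow_def_of_pos hp, mul_comm]
  rw [hrw1, hrw2]
  have ha0 : ((r : ℝ) - 1) * Real.log p ≤ 0 :=
    mul_nonpos_of_nonneg_of_nonpos (by linarith) hlp.le
  rcases le_or_gt (-(4 * lam) / p) (C * ((r : ℝ) - 1) * Real.log p) with hcase | hcase
  · -- Case 1: p^{C(r-1)} ≥ e^{-4λ/p}; use min ≤ 1
    have h1 : C * ((r : ℝ) - 1) * L ≤ 4 * lam / p := by
      have : -(4 * lam / p) ≤ -(C * ((r : ℝ) - 1) * L) := by
        simp only [hLdef]
        have : -(4 * lam) / p = -(4 * lam / p) := by ring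
        rw [this] at hcase; linarith [hcase]
      linarith
    -- goal: exp(-ε/p) * min ... ≤ exp(C₃ r log p)
    have hmin : min 1 (Real.exp (2 * lam / p) * Real.exp (C * ((r : ℝ) - 1) * Real.log p)) ≤ 1 :=
      min_le_left _ _
    have hkey : C₃ * (r : ℝ) * L ≤ ε / p := by
      have hrL : ((r : ℝ) - 1) * L ≥ 0 := mul_nonneg (by linarith) hL0.le
      have e1 : C₃ * ((r : ℝ) - 1) * L ≤ ε / (2 * p) := by
        have : C₃ * (((r : ℝ) - 1) * L) ≤ (ε * C / (8 * lam)) * (((r : ℝ) - 1) * L) :=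
          mul_le_mul_of_nonneg_right hC₃1 hrL
        have h2 : (ε * C / (8 * lam)) * (((r : ℝ) - 1) * L) ≤ (ε / (8 * lam)) * (4 * lam / p) := by
          have := mul_le_mul_of_nonneg_left h1 (le_of_lt (show (0:ℝ) < ε / (8 * lam) by positivity))
          calc (ε * C / (8 * lam)) * (((r : ℝ) - 1) * L)
              = (ε / (8 * lam)) * (C * (((r : ℝ) - 1)) * L) := by ring
            _ ≤ (ε / (8 * lam)) * (4 * lam / p) := this
        have h3 : (ε / (8 * lam)) * (4 * lam / p) = ε / (2 * p) := by
          field_simp; ring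
        calc C₃ * ((r : ℝ) - 1) * L = C₃ * (((r : ℝ) - 1) * L) := by ring
          _ ≤ ε / (2 * p) := by linarith
      have e2 : C₃ * L ≤ ε / (2 * p) := by
        have h0 : C₃ * L ≤ (ε / 2) * L := mul_le_mul_of_nonneg_right hC₃4 hL0.le
        have hL1p : L ≤ 1 / p := by rw [le_div_iff₀ hp]; linarith [hpL1]
        have h2 : (ε / 2) * L ≤ ε / (2 * p) := by
          calc (ε / 2) * L ≤ (ε / 2) * (1 / p) :=
                mul_le_mul_of_nonneg_left hL1p (by positivity)
            _ = ε / (2 * p) := by ring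
        linarith
      have hsum : ε / (2 * p) + ε / (2 * p) = ε / p := by field_simp; ring
      linarith [e1, e2]
    calc Real.exp (-ε / p) * min 1 (Real.exp (2 * lam / p) * Real.exp (C * ((r:ℝ) - 1) * Real.log p))
        ≤ Real.exp (-ε / p) * 1 := mul_le_mul_of_nonneg_left hmin (Real.exp_pos _).le
      _ = Real.exp (-ε / p) := mul_one _
      _ ≤ Real.exp (C₃ * (r : ℝ) * Real.log p) := by
          apply Real.exp_le_exp.mpr
          have : C₃ * (r : ℝ) * Real.log p = -(C₃ * (r : ℝ) * L) := by rw [hLdef]; ring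
          rw [this]
          have : -ε / p = -(ε / p) := by ring
          rw [this]
          linarith [hkey]
  · -- Case 2: C(r-1) log p < -4λ/p
    have hmin : min 1 (Real.exp (2 * lam / p) * Real.exp (C * ((r : ℝ) - 1) * Real.log p)) ≤
        Real.exp (2 * lam / p) * Real.exp (C * ((r : ℝ) - 1) * Real.log p) := min_le_right _ _
    have hCa : C * (((r : ℝ) - 1) * Real.log p) ≤ -(4 * lam) / p := by
      have := hcase.le; linarith [this]
    have hkey : -ε / p + 2 * lam / p + C * ((r : ℝ) - 1) * Real.log p ≤
        C₃ * (r : ℝ) * Real.log p := by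
      -- C₃ r log p = C₃ log p + C₃ (r-1) log p ≥ log p + (C/2)(r-1) log p
      have e1 : Real.log p ≤ C₃ * Real.log p := by
        have h := mul_le_mul_of_nonneg_right hC₃3 (by linarith : (0:ℝ) ≤ -Real.log p)
        linarith [h]
      have e2 : (C / 2) * (((r : ℝ) - 1) * Real.log p) ≤ C₃ * (((r : ℝ) - 1) * Real.log p) :=
        mul_le_mul_of_nonpos_right hC₃2 ha0
      have e3 : (C / 2) * (((r : ℝ) - 1) * Real.log p) ≤ -(2 * lam / p) := by
        have h4 : (-(4 * lam)) / p = 2 * (-(2 * lam / p)) := by ring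
        linarith [hCa, h4]
      have e4 : -(ε / p) ≤ Real.log p := by
        simp only [hLdef] at hεL
        linarith [hεL]
      have g : -ε / p = -(ε / p) := by ring
      rw [g]
      linarith [e1, e2, e3, e4]
    calc Real.exp (-ε / p) * min 1 (Real.exp (2 * lam / p) * Real.exp (C * ((r:ℝ) - 1) * Real.log p))
        ≤ Real.exp (-ε / p) * (Real.exp (2 * lam / p) * Real.exp (C * ((r:ℝ) - 1) * Real.log p)) :=
          mul_le_mul_of_nonneg_left hmin (Real.exp_pos _).le
      _ = Real.exp (-ε / p + 2 * lam / p + C * ((r : ℝ) - 1) * Real.log p) := by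
          rw [← Real.exp_add, ← Real.exp_add, add_assoc]
      _ ≤ Real.exp (C₃ * (r : ℝ) * Real.log p) := Real.exp_le_exp.mpr hkey
end
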